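/- Let r ≥ 2 and s ≥ 1. The set Σ := {ν_1−ν_2, …, ν_{s−1}−ν_s, ν_s−ε_1, ε_1−ε_2, …, ε_{r−1}−ε_r, ε_r} is a base of Δ := Δ_reg ∪ Δ_sing, where Δ_reg := {±ε_i±ε_j : 1 ≤ i < j ≤ r} ∪ {±ν_i±ν_j : 1 ≤ i < j ≤ s} ∪ {±ν_j, ±2ν_j : 1 ≤ j ≤ s} and Δ_sing := {±ε_i : 1 ≤ i ≤ r} ∪ {±ε_i±ν_j : 1 ≤ i ≤ r, 1 ≤ j ≤ s}. Moreover Π := {ε_1−ε_2, …, ε_{r−1}−ε_r, ε_{r−1}+ε_r, ν_1−ν_2, …, ν_{s−1}−ν_s, ν_s} is a base of Δ_reg with Δ_reg ∩ ℕΠ = Δ_reg ∩ ℕΣ. (Δ is the restricted root system of the pair (osp(2r|2n), osp(r|2s)×osp(r|2n−2s)) with even part D_r ⊔ BC_s, and Π is the set of principal roots determined by Σ.) -/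

import Mathlib

open Pointwise

/-- `NComb S` is the set of all finite linear combinations of elements of `S`
with non-negative integer coefficients, i.e. the additive submonoid generated by `S`. -/
def NComb {V : Type*} [AddCommMonoid V] (S : Set V) : Set V :=
  (AddSubmonoid.closure S : Set V)

/-- `B` is a base of `Δ`: `B ⊆ Δ`, `B` is linearly independent over `ℝ`, and
`Δ ⊆ ℕB ∪ (−ℕB)`. -/
def IsBase {V : Type*} [AddCommGroup V] [Module ℝ V] (Δ B : Set V) : Prop :=
  B ⊆ Δ ∧ LinearIndependent ℝ (fun x : B => (x : V)) ∧
    Δ ⊆ NComb B ∪ (-NComb B)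

/-- The `i`-th standard basis vector of `ℝⁿ` (indices are 0-based; junk value `0` out of range). -/
def bv (n i : ℕ) : Fin n → ℝ :=
  if h : i < n then Pi.single (⟨i, h⟩ : Fin n) 1 else 0

/-- The set `{1, -1}` of signs. -/
def pm : Set ℝ := {1, -1}
/-- The even part `Δ_reg = {±ε_i±ε_j : i<j} ∪ {±ν_i±ν_j : i<j} ∪ {±ν_j, ±2ν_j}` of the
restricted root system of `(osp(2r|2n), osp(r|2s) × osp(r|2n−2s))`, with `ε_i = bv (r+s) i`
for `0 ≤ i < r` (0-based) and `ν_j = bv (r+s) (r+j)` for `0 ≤ j < s`. -/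
def Dreg (r s : ℕ) : Set (Fin (r + s) → ℝ) :=
  {x | ∃ a ∈ pm, ∃ b ∈ pm, ∃ i j : ℕ, i < j ∧ j < r ∧
      x = a • bv (r + s) i + b • bv (r + s) j} ∪
  {x | ∃ a ∈ pm, ∃ b ∈ pm, ∃ i j : ℕ, i < j ∧ j < s ∧
      x = a • bv (r + s) (r + i) + b • bv (r + s) (r + j)} ∪
  {x | ∃ a ∈ pm, ∃ j : ℕ, j < s ∧
      (x = a • bv (r + s) (r + j) ∨ x = (2 * a) • bv (r + s) (r + j))}

/-- The singular part `Δ_sing = {±ε_i} ∪ {±ε_i±ν_j}`. -/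
def Dsing (r s : ℕ) : Set (Fin (r + s) → ℝ) :=
  {x | ∃ a ∈ pm, ∃ i : ℕ, i < r ∧ x = a • bv (r + s) i} ∪
  {x | ∃ a ∈ pm, ∃ b ∈ pm, ∃ i j : ℕ, i < r ∧ j < s ∧
      x = a • bv (r + s) i + b • bv (r + s) (r + j)}

/-- The base `Σ = {ν_1−ν_2, …, ν_{s−1}−ν_s, ν_s−ε_1, ε_1−ε_2, …, ε_{r−1}−ε_r, ε_r}`
(0-based indices). -/
def S17 (r s : ℕ) : Set (Fin (r + s) → ℝ) :=
  {x | ∃ j : ℕ, j + 1 < s ∧ x = bv (r + s) (r + j) - bv (r + s) (r + j + 1)} ∪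
  {bv (r + s) (r + s - 1) - bv (r + s) 0} ∪
  {x | ∃ i : ℕ, i + 1 < r ∧ x = bv (r + s) i - bv (r + s) (i + 1)} ∪
  {bv (r + s) (r - 1)}

/-- The principal roots
`Π = {ε_1−ε_2, …, ε_{r−1}−ε_r, ε_{r−1}+ε_r, ν_1−ν_2, …, ν_{s−1}−ν_s, ν_s}`
(0-based indices). -/
def P17 (r s : ℕ) : Set (Fin (r + s) → ℝ) :=
  {x | ∃ i : ℕ, i + 1 < r ∧ x = bv (r + s) i - bv (r + s) (i + 1)} ∪
  {bv (r + s) (r - 2) + bv (r + s) (r - 1)} ∪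
  {x | ∃ j : ℕ, j + 1 < s ∧ x = bv (r + s) (r + j) - bv (r + s) (r + j + 1)} ∪
  {bv (r + s) (r + s - 1)}

/-!
List the coordinates as the chain `ν_1, …, ν_s, ε_1, …, ε_r`. Then `Σ` is the standard base
`{u_1 - u_2, …, u_{n-1} - u_n, u_n}` of type `B_{r+s}` of this chain, and `Π` is the standard
`D_r` base of the `ε`-chain together with the `B_s` base of the `ν`-chain. For such a base every
`u_k - u_l` with `k ≤ l` and every `u_k + u_l` with `k < l` lies in its `ℕ`-span, which gives the
covering property; each base has `r + s` elements and spans, hence is linearly independent.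
Finally `Π ⊆ ℕΣ`, and a linearly independent set generates a pointed cone (its coordinates in a
basis extending it are all non-negative), so a root of `Δ_reg` in `ℕΣ` cannot lie in `-ℕΠ`.
-/

section Chains

variable {V : Type*} [AddCommGroup V]

def chainDiffs (u : ℕ → V) (n : ℕ) : Set V :=
  {x | ∃ k, k + 1 < n ∧ x = u k - u (k + 1)}

def baseB (u : ℕ → V) (n : ℕ) : Set V := chainDiffs u n ∪ {u (n - 1)}

def baseD (u : ℕ → V) (n : ℕ) : Set V := chainDiffs u n ∪ {u (n - 2) + u (n - 1)}

def chainAppend (v w : ℕ → V) (m k : ℕ) : V := if k < m then v k else w (k - m)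

def chainFamily (u : ℕ → V) (n : ℕ) (last : V) (k : Fin n) : V :=
  if (k : ℕ) + 1 < n then u k - u (k + 1) else last

variable {u : ℕ → V} {n k l : ℕ}

theorem sub_mem_closure_chainDiffs (hkl : k ≤ l) (hl : l < n) :
    u k - u l ∈ AddSubmonoid.closure (chainDiffs u n) := by
  induction l, hkl using Nat.le_induction with
  | base => simp
  | succ l _ ih =>
    rw [← sub_add_sub_cancel (u k) (u l) (u (l + 1))]
    exact add_mem (ih (by omega)) (AddSubmonoid.subset_closure ⟨l, hl, rfl⟩)

theorem sub_mem_closure_baseB (hkl : k ≤ l) (hl : l < n) :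
    u k - u l ∈ AddSubmonoid.closure (baseB u n) :=
  AddSubmonoid.closure_mono Set.subset_union_left (sub_mem_closure_chainDiffs hkl hl)

theorem sub_mem_closure_baseD (hkl : k ≤ l) (hl : l < n) :
    u k - u l ∈ AddSubmonoid.closure (baseD u n) :=
  AddSubmonoid.closure_mono Set.subset_union_left (sub_mem_closure_chainDiffs hkl hl)

theorem mem_closure_baseB (hk : k < n) : u k ∈ AddSubmonoid.closure (baseB u n) := by
  rw [← sub_add_cancel (u k) (u (n - 1))]
  exact add_mem (sub_mem_closure_baseB (by omega) (by omega))
    (AddSubmonoid.subset_closure (Or.inr rfl))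

theorem add_mem_closure_baseB (hk : k < n) (hl : l < n) :
    u k + u l ∈ AddSubmonoid.closure (baseB u n) :=
  add_mem (mem_closure_baseB hk) (mem_closure_baseB hl)

theorem add_mem_closure_baseD (hkl : k < l) (hl : l < n) :
    u k + u l ∈ AddSubmonoid.closure (baseD u n) := by
  have hsplit : u k + u l = (u k - u (n - 2)) + (u l - u (n - 1)) + (u (n - 2) + u (n - 1)) := by
    abel
  rw [hsplit]
  exact add_mem (add_mem (sub_mem_closure_baseD (by omega) (by omega))
    (sub_mem_closure_baseD (by omega) (by omega))) (AddSubmonoid.subset_closure (Or.inr rfl))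

theorem chainDiffs_append {v w : ℕ → V} {m : ℕ} (hm : 0 < m) (hn : 0 < n) :
    chainDiffs (chainAppend v w m) (m + n) =
      chainDiffs v m ∪ {v (m - 1) - w 0} ∪ chainDiffs w n := by
  ext x
  constructor
  · rintro ⟨k, hk, rfl⟩
    rcases lt_trichotomy (k + 1) m with h | h | h
    · exact Or.inl (Or.inl ⟨k, h, by simp [chainAppend, h, show k < m by omega]⟩)
    · refine Or.inl (Or.inr ?_)
      simp [chainAppend, ← h]
    · refine Or.inr ⟨k - m, by omega, ?_⟩
      simp [chainAppend, show ¬ k < m by omega, show ¬ k + 1 < m by omega,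
        show k + 1 - m = k - m + 1 by omega]
  · rintro ((⟨k, hk, rfl⟩ | rfl) | ⟨k, hk, rfl⟩)
    · exact ⟨k, by omega, by simp [chainAppend, hk, show k < m by omega]⟩
    · exact ⟨m - 1, by omega, by simp [chainAppend, show m - 1 < m by omega,
        show m - 1 + 1 = m by omega]⟩
    · exact ⟨m + k, by omega, by
        simp [chainAppend, show ¬ m + k + 1 < m by omega, show m + k + 1 - m = k + 1 by omega]⟩

theorem baseB_append {v w : ℕ → V} {m : ℕ} (hm : 0 < m) (hn : 0 < n) :
    baseB (chainAppend v w m) (m + n) =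
      chainDiffs v m ∪ {v (m - 1) - w 0} ∪ chainDiffs w n ∪ {w (n - 1)} := by
  rw [baseB, chainDiffs_append hm hn]
  simp [chainAppend, show ¬ m + n - 1 < m by omega, show m + n - 1 - m = n - 1 by omega]

theorem chainDiffs_union_subset_range_chainFamily (hn : 0 < n) (last : V) :
    chainDiffs u n ∪ {last} ⊆ Set.range (chainFamily u n last) := by
  rintro x (⟨k, hk, rfl⟩ | rfl)
  · exact ⟨⟨k, by omega⟩, if_pos hk⟩
  · exact ⟨⟨n - 1, by omega⟩, if_neg (show ¬ n - 1 + 1 < n by omega)⟩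

end Chains

section Cones

variable {V : Type*} [AddCommGroup V] {B B' Δ : Set V}

theorem nComb_union_neg_mono (h : B ⊆ B') :
    NComb B ∪ -NComb B ⊆ NComb B' ∪ -NComb B' :=
  have hmono : NComb B ⊆ NComb B' := AddSubmonoid.closure_mono h
  Set.union_subset_union hmono (Set.neg_subset_neg.mpr hmono)

theorem pm_smul_mem [Module ℝ V] {x : V} (hx : x ∈ NComb B) {a : ℝ} (ha : a ∈ pm) :
    a • x ∈ NComb B ∪ -NComb B := by
  rcases ha with rfl | rfl
  · exact Or.inl (by rwa [one_smul])
  · exact Or.inr (by rwa [Set.mem_neg, neg_one_smul, neg_neg])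

theorem pm_smul_add_pm_smul_mem [Module ℝ V] {x y : V} (hadd : x + y ∈ NComb B)
    (hsub : x - y ∈ NComb B) {a b : ℝ} (ha : a ∈ pm) (hb : b ∈ pm) :
    a • x + b • y ∈ NComb B ∪ -NComb B := by
  rcases ha with rfl | rfl <;> rcases hb with rfl | rfl
  · exact Or.inl (by convert hadd using 1; module)
  · exact Or.inl (by convert hsub using 1; module)
  · exact Or.inr (by rw [Set.mem_neg]; convert hsub using 1; module)
  · exact Or.inr (by rw [Set.mem_neg]; convert hadd using 1; module)

theorem eq_zero_of_mem_nComb_of_neg_mem {K : Type*} [Field K] [LinearOrder K]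
    [IsStrictOrderedRing K] [Module K V] (hB : LinearIndependent K (fun x : B => (x : V))) {x : V}
    (hx : x ∈ NComb B) (hnx : -x ∈ NComb B) : x = 0 := by
  let b := Module.Basis.extend (s := B) hB
  have hcoord : ∀ y ∈ NComb B, ∀ i, 0 ≤ b.repr y i := by
    intro y hy
    induction hy using AddSubmonoid.closure_induction with
    | mem y hy =>
      have hby : b ⟨y, Module.Basis.subset_extend hB hy⟩ = y :=
        Module.Basis.extend_apply_self hB _
      intro i
      rw [← hby, b.repr_self]
      exact Finsupp.single_nonneg.mpr zero_le_one i
    | zero => simp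
    | add y z _ _ hy hz => intro i; simpa using add_nonneg (hy i) (hz i)
  refine b.repr.injective (Finsupp.ext fun i => le_antisymm ?_ (by simpa using hcoord x hx i))
  simpa using hcoord (-x) hnx i

theorem inter_nComb_eq_of_subset_nComb {K : Type*} [Field K] [LinearOrder K]
    [IsStrictOrderedRing K] [Module K V] (hB : LinearIndependent K (fun x : B => (x : V)))
    (hB' : B' ⊆ NComb B) (hcover : Δ ⊆ NComb B' ∪ -NComb B') (hzero : (0 : V) ∉ Δ) :
    Δ ∩ NComb B' = Δ ∩ NComb B := by
  have hmono : NComb B' ⊆ NComb B := AddSubmonoid.closure_le.mpr hB'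
  refine subset_antisymm (Set.inter_subset_inter_right _ hmono) ?_
  rintro x ⟨hxΔ, hxB⟩
  refine ⟨hxΔ, (hcover hxΔ).resolve_right fun hneg => ?_⟩
  exact hzero (eq_zero_of_mem_nComb_of_neg_mem hB hxB (hmono hneg) ▸ hxΔ)

end Cones

section ChainCones

variable {V : Type*} [AddCommGroup V] [Module ℝ V] {u : ℕ → V} {n k l : ℕ} {a b : ℝ}

theorem pm_smul_add_pm_smul_mem_baseB (hkl : k ≤ l) (hl : l < n) (ha : a ∈ pm) (hb : b ∈ pm) :
    a • u k + b • u l ∈ NComb (baseB u n) ∪ -NComb (baseB u n) :=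
  pm_smul_add_pm_smul_mem (add_mem_closure_baseB (by omega) hl) (sub_mem_closure_baseB hkl hl)
    ha hb

theorem pm_smul_add_pm_smul_mem_baseD (hkl : k < l) (hl : l < n) (ha : a ∈ pm) (hb : b ∈ pm) :
    a • u k + b • u l ∈ NComb (baseD u n) ∪ -NComb (baseD u n) :=
  pm_smul_add_pm_smul_mem (add_mem_closure_baseD hkl hl) (sub_mem_closure_baseD hkl.le hl) ha hb

theorem mem_span_baseD (hn : 2 ≤ n) (hk : k < n) : u k ∈ Submodule.span ℝ (baseD u n) := by
  have hadd {i j : ℕ} (hij : i < j) (hj : j < n) : u i + u j ∈ Submodule.span ℝ (baseD u n) :=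
    Submodule.closure_subset_span (add_mem_closure_baseD hij hj)
  have hsub {i j : ℕ} (hij : i < j) (hj : j < n) : u i - u j ∈ Submodule.span ℝ (baseD u n) :=
    Submodule.closure_subset_span (sub_mem_closure_baseD hij.le hj)
  by_cases hlast : k + 1 < n
  · have hk' : u k = (1 / 2 : ℝ) • ((u k + u (n - 1)) + (u k - u (n - 1))) := by module
    rw [hk']
    exact Submodule.smul_mem _ _ (add_mem (hadd (by omega) (by omega)) (hsub (by omega) (by omega)))
  · have hk' : u k = (1 / 2 : ℝ) • ((u (n - 2) + u k) - (u (n - 2) - u k)) := by module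
    rw [hk']
    exact Submodule.smul_mem _ _ (sub_mem (hadd (by omega) hk) (hsub (by omega) hk))

end ChainCones

theorem linearIndependent_of_subset_range {K V ι : Type*} [Field K] [AddCommGroup V]
    [Module K V] [Fintype ι] {B : Set V} {f : ι → V} (hBf : B ⊆ Set.range f)
    (hcard : Fintype.card ι = Module.finrank K V) (hspan : ⊤ ≤ Submodule.span K B) :
    LinearIndependent K (fun x : B => (x : V)) :=
  (linearIndependent_of_top_le_span_of_card_eq_finrank
    (hspan.trans (Submodule.span_mono hBf)) hcard).linearIndepOn_id.mono hBf

theorem bv_apply (n i : ℕ) (m : Fin n) : bv n i m = if (m : ℕ) = i then 1 else 0 := by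
  by_cases hi : i < n
  · simp [bv, hi, Pi.single_apply, Fin.ext_iff]
  · rw [bv, dif_neg hi, if_neg (by omega), Pi.zero_apply]

theorem top_le_span_of_bv_mem {n : ℕ} {W : Submodule ℝ (Fin n → ℝ)}
    (h : ∀ i < n, bv n i ∈ W) : ⊤ ≤ W := by
  rw [← (Pi.basisFun ℝ (Fin n)).span_eq, Submodule.span_le]
  rintro _ ⟨i, rfl⟩
  simpa [bv] using h i i.isLt

section RootSystem

variable {r s : ℕ}

def nu (r s j : ℕ) : Fin (r + s) → ℝ := bv (r + s) (r + j)

def sigmaChain (r s : ℕ) : ℕ → Fin (r + s) → ℝ := chainAppend (nu r s) (bv (r + s)) s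

theorem sigmaChain_nu {j : ℕ} (hj : j < s) : sigmaChain r s j = bv (r + s) (r + j) := if_pos hj

theorem sigmaChain_eps (i : ℕ) : sigmaChain r s (s + i) = bv (r + s) i := by
  simp [sigmaChain, chainAppend]

theorem S17_eq_baseB (hr : 1 ≤ r) (hs : 1 ≤ s) : S17 r s = baseB (sigmaChain r s) (s + r) := by
  rw [sigmaChain, baseB_append (by omega) (by omega), nu, show r + (s - 1) = r + s - 1 by omega]
  rfl

theorem P17_eq (hs : 1 ≤ s) : P17 r s = baseD (bv (r + s)) r ∪ baseB (nu r s) s := by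
  rw [baseB, nu, show r + (s - 1) = r + s - 1 by omega, ← Set.union_assoc]
  rfl

theorem S17_subset_Dreg_union_Dsing (hr : 1 ≤ r) (hs : 1 ≤ s) :
    S17 r s ⊆ Dreg r s ∪ Dsing r s := by
  rintro x (((⟨j, hj, rfl⟩ | rfl) | ⟨i, hi, rfl⟩) | rfl)
  · exact Or.inl (Or.inl (Or.inr ⟨1, Or.inl rfl, -1, Or.inr rfl, j, j + 1, by omega, hj,
      by module⟩))
  · refine Or.inr (Or.inr ⟨-1, Or.inr rfl, 1, Or.inl rfl, 0, s - 1, hr, by omega, ?_⟩)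
    rw [show r + (s - 1) = r + s - 1 by omega]
    module
  · exact Or.inl (Or.inl (Or.inl ⟨1, Or.inl rfl, -1, Or.inr rfl, i, i + 1, by omega, hi,
      by module⟩))
  · exact Or.inr (Or.inl ⟨1, Or.inl rfl, r - 1, by omega, by module⟩)

theorem P17_subset_Dreg (hr : 2 ≤ r) (hs : 1 ≤ s) : P17 r s ⊆ Dreg r s := by
  rintro x (((⟨i, hi, rfl⟩ | rfl) | ⟨j, hj, rfl⟩) | rfl)
  · exact Or.inl (Or.inl ⟨1, Or.inl rfl, -1, Or.inr rfl, i, i + 1, by omega, hi, by module⟩)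
  · exact Or.inl (Or.inl ⟨1, Or.inl rfl, 1, Or.inl rfl, r - 2, r - 1, by omega, by omega,
      by module⟩)
  · exact Or.inl (Or.inr ⟨1, Or.inl rfl, -1, Or.inr rfl, j, j + 1, by omega, hj, by module⟩)
  · refine Or.inr ⟨1, Or.inl rfl, s - 1, by omega, Or.inl ?_⟩
    rw [show r + (s - 1) = r + s - 1 by omega]
    module

theorem Dreg_union_Dsing_subset_nComb_union_neg (hr : 1 ≤ r) (hs : 1 ≤ s) :
    Dreg r s ∪ Dsing r s ⊆ NComb (S17 r s) ∪ -NComb (S17 r s) := by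
  rw [S17_eq_baseB hr hs]
  rintro x (((⟨a, ha, b, hb, i, j, hij, hj, rfl⟩ | ⟨a, ha, b, hb, i, j, hij, hj, rfl⟩) |
    ⟨a, ha, j, hj, rfl | rfl⟩) |
    (⟨a, ha, i, hi, rfl⟩ | ⟨a, ha, b, hb, i, j, hi, hj, rfl⟩))
  · simpa only [sigmaChain_eps] using
      pm_smul_add_pm_smul_mem_baseB (u := sigmaChain r s) (k := s + i) (l := s + j)
        (by omega) (by omega) ha hb
  · simpa only [sigmaChain_nu hj, sigmaChain_nu (hij.trans hj)] using
      pm_smul_add_pm_smul_mem_baseB (u := sigmaChain r s) hij.le (by omega) ha hb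
  · simpa only [sigmaChain_nu hj] using
      pm_smul_mem (mem_closure_baseB (u := sigmaChain r s) (k := j) (by omega)) ha
  · rw [two_mul, add_smul]
    simpa only [sigmaChain_nu hj] using
      pm_smul_add_pm_smul_mem_baseB (u := sigmaChain r s) (n := s + r) (le_refl j) (by omega)
        ha ha
  · simpa only [sigmaChain_eps] using
      pm_smul_mem (mem_closure_baseB (u := sigmaChain r s) (k := s + i) (by omega)) ha
  · rw [add_comm (a • bv (r + s) i)]
    simpa only [sigmaChain_eps, sigmaChain_nu hj] using
      pm_smul_add_pm_smul_mem_baseB (u := sigmaChain r s) (k := j) (l := s + i)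
        (by omega) (by omega) hb ha

theorem Dreg_subset_nComb_union_neg (hs : 1 ≤ s) :
    Dreg r s ⊆ NComb (P17 r s) ∪ -NComb (P17 r s) := by
  rw [P17_eq hs]
  rintro x ((⟨a, ha, b, hb, i, j, hij, hj, rfl⟩ | ⟨a, ha, b, hb, i, j, hij, hj, rfl⟩) |
    ⟨a, ha, j, hj, rfl | rfl⟩)
  · exact nComb_union_neg_mono Set.subset_union_left
      (pm_smul_add_pm_smul_mem_baseD hij hj ha hb)
  · exact nComb_union_neg_mono Set.subset_union_right
      (pm_smul_add_pm_smul_mem_baseB (u := nu r s) hij.le hj ha hb)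
  · exact nComb_union_neg_mono Set.subset_union_right
      (pm_smul_mem (mem_closure_baseB (u := nu r s) hj) ha)
  · rw [two_mul, add_smul]
    exact nComb_union_neg_mono Set.subset_union_right
      (pm_smul_add_pm_smul_mem_baseB (u := nu r s) (le_refl j) hj ha ha)

theorem bv_mem_closure_S17 (hr : 1 ≤ r) (hs : 1 ≤ s) {i : ℕ} (hi : i < r + s) :
    bv (r + s) i ∈ AddSubmonoid.closure (S17 r s) := by
  rw [S17_eq_baseB hr hs]
  by_cases h : i < r
  · simpa only [sigmaChain_eps] using
      mem_closure_baseB (u := sigmaChain r s) (n := s + r) (k := s + i) (by omega)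
  · have hi' := mem_closure_baseB (u := sigmaChain r s) (n := s + r) (k := i - r) (by omega)
    rwa [sigmaChain_nu (by omega), show r + (i - r) = i by omega] at hi'

theorem linearIndependent_S17 (hr : 1 ≤ r) (hs : 1 ≤ s) :
    LinearIndependent ℝ (fun x : S17 r s => (x : Fin (r + s) → ℝ)) := by
  refine linearIndependent_of_subset_range
    (f := chainFamily (sigmaChain r s) (s + r) (sigmaChain r s (s + r - 1))) ?_
    (by simp [add_comm]) (top_le_span_of_bv_mem fun i hi =>
      Submodule.closure_subset_span (bv_mem_closure_S17 hr hs hi))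
  rw [S17_eq_baseB hr hs]
  exact chainDiffs_union_subset_range_chainFamily (by omega) _

theorem linearIndependent_P17 (hr : 2 ≤ r) (hs : 1 ≤ s) :
    LinearIndependent ℝ (fun x : P17 r s => (x : Fin (r + s) → ℝ)) := by
  refine linearIndependent_of_subset_range
    (f := Sum.elim (chainFamily (bv (r + s)) r (bv (r + s) (r - 2) + bv (r + s) (r - 1)))
      (chainFamily (nu r s) s (nu r s (s - 1)))) ?_
    (by simp) (top_le_span_of_bv_mem fun i hi => ?_)
  · rw [P17_eq hs, Set.Sum.elim_range]
    exact Set.union_subset_union (chainDiffs_union_subset_range_chainFamily (by omega) _)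
      (chainDiffs_union_subset_range_chainFamily (by omega) _)
  rw [P17_eq hs]
  by_cases h : i < r
  · exact Submodule.span_mono Set.subset_union_left (mem_span_baseD hr h)
  · have hi' := mem_closure_baseB (u := nu r s) (k := i - r) (n := s) (by omega)
    rw [nu, show r + (i - r) = i by omega] at hi'
    exact Submodule.span_mono Set.subset_union_right (Submodule.closure_subset_span hi')

theorem P17_subset_nComb_S17 (hr : 2 ≤ r) (hs : 1 ≤ s) : P17 r s ⊆ NComb (S17 r s) := by
  rw [S17_eq_baseB (by omega) hs]
  rintro x (((⟨i, hi, rfl⟩ | rfl) | ⟨j, hj, rfl⟩) | rfl)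
  · have h := sub_mem_closure_baseB (u := sigmaChain r s) (n := s + r) (k := s + i)
      (l := s + (i + 1)) (by omega) (by omega)
    rwa [sigmaChain_eps, sigmaChain_eps] at h
  · have h := add_mem_closure_baseB (u := sigmaChain r s) (n := s + r) (k := s + (r - 2))
      (l := s + (r - 1)) (by omega) (by omega)
    rwa [sigmaChain_eps, sigmaChain_eps] at h
  · have h := sub_mem_closure_baseB (u := sigmaChain r s) (n := s + r) (k := j) (l := j + 1)
      (by omega) (by omega)
    rwa [sigmaChain_nu (by omega), sigmaChain_nu hj, ← add_assoc] at h
  · have h := mem_closure_baseB (u := sigmaChain r s) (n := s + r) (k := s - 1) (by omega)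
    rwa [sigmaChain_nu (by omega), show r + (s - 1) = r + s - 1 by omega] at h

theorem zero_notMem_Dreg : (0 : Fin (r + s) → ℝ) ∉ Dreg r s := by
  have hpm {a : ℝ} (ha : a ∈ pm) : a ≠ 0 := by rcases ha with rfl | rfl <;> norm_num
  rintro ((⟨a, ha, b, hb, i, j, hij, hj, h⟩ | ⟨a, ha, b, hb, i, j, hij, hj, h⟩) |
    ⟨a, ha, j, hj, h | h⟩)
  · have hj' := congrFun h ⟨j, by omega⟩
    simp [bv_apply, hij.ne', (hpm hb).symm] at hj'
  · have hj' := congrFun h ⟨r + j, by omega⟩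
    simp [bv_apply, hij.ne', (hpm hb).symm] at hj'
  · have hj' := congrFun h ⟨r + j, by omega⟩
    simp [bv_apply, (hpm ha).symm] at hj'
  · have hj' := congrFun h ⟨r + j, by omega⟩
    simp [bv_apply, hpm ha] at hj'

end RootSystem

/-- `Σ` is a base of `Δ = Δ_reg ∪ Δ_sing`, and `Π` is a base of `Δ_reg` inducing the same
positive system on `Δ_reg` as `Σ`. -/
theorem statement17 (r s : ℕ) (hr : 2 ≤ r) (hs : 1 ≤ s) :
    IsBase (Dreg r s ∪ Dsing r s) (S17 r s) ∧
    IsBase (Dreg r s) (P17 r s) ∧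
    Dreg r s ∩ NComb (P17 r s) = Dreg r s ∩ NComb (S17 r s) :=
  ⟨⟨S17_subset_Dreg_union_Dsing (by omega) hs, linearIndependent_S17 (by omega) hs,
      Dreg_union_Dsing_subset_nComb_union_neg (by omega) hs⟩,
    ⟨P17_subset_Dreg hr hs, linearIndependent_P17 hr hs, Dreg_subset_nComb_union_neg hs⟩,
    inter_nComb_eq_of_subset_nComb (linearIndependent_S17 (by omega) hs)
      (P17_subset_nComb_S17 hr hs) (Dreg_subset_nComb_union_neg hs) zero_notMem_Dreg⟩
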